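/- arXiv:2003.03012 — 4 statements merged into one kernel-verified Lean document; each statement's English description precedes it below -/
import Mathlib

section
/- Let E be a real normed vector space, U ⊆ E an open convex set, and φ : E → ℝ twice continuously differentiable on U with ‖φ''(x)‖ ≤ M for all x ∈ U. Let m ≥ 1, let u_0, …, u_{m−1} ∈ U, and let ν_0, …, ν_{m−1} ≥ 0 with ∑_{i=0}^{m−1} ν_i = 1; set ū = ∑_{i=0}^{m−1} ν_i u_i (which lies in U by convexity). Then |∑_{i=0}^{m−1} ν_i φ(u_i) − φ(ū)| ≤ (M/2) · max_{0 ≤ i ≤ m−1} ‖u_i − ū‖². -/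
open Set

lemma taylor_key
    {E : Type*} [NormedAddCommGroup E] [NormedSpace ℝ E]
    (U : Set E) (hUopen : IsOpen U) (hUconv : Convex ℝ U)
    (φ : E → ℝ) (M : ℝ)
    (hφ : ContDiffOn ℝ 2 φ U)
    (hM : ∀ x ∈ U, ‖iteratedFDerivWithin ℝ 2 φ U x‖ ≤ M)
    {x₀ x : E} (hx₀ : x₀ ∈ U) (hx : x ∈ U) :
    |φ x - φ x₀ - fderiv ℝ φ x₀ (x - x₀)| ≤ M / 2 * ‖x - x₀‖ ^ 2 := by
  have huniq : UniqueDiffOn ℝ U := hUopen.uniqueDiffOn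
  set iF1 := iteratedFDerivWithin ℝ 1 φ U with hiF1def
  have hdiffφ : DifferentiableOn ℝ φ U := hφ.differentiableOn (by norm_num)
  have hφat : ∀ y ∈ U, DifferentiableAt ℝ φ y := fun y hy =>
    (hdiffφ y hy).differentiableAt (hUopen.mem_nhds hy)
  have hiF1diff : DifferentiableOn ℝ iF1 U := by
    apply hφ.differentiableOn_iteratedFDerivWithin _ huniq
    norm_num
  have bound2 : ∀ y ∈ U, ‖fderivWithin ℝ iF1 U y‖ ≤ M := fun y hy => by
    rw [hiF1def, norm_fderivWithin_iteratedFDerivWithin]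
    exact hM y hy
  have lip : ∀ y ∈ U, ‖iF1 y - iF1 x₀‖ ≤ M * ‖y - x₀‖ := fun y hy =>
    hUconv.norm_image_sub_le_of_norm_fderivWithin_le hiF1diff bound2 hx₀ hy
  have fderiv_eq : ∀ y ∈ U,
      (continuousMultilinearCurryFin1 ℝ E ℝ) (iF1 y) = fderiv ℝ φ y := by
    intro y hy
    ext v
    rw [continuousMultilinearCurryFin1_apply, hiF1def,
      iteratedFDerivWithin_one_apply (huniq y hy)]
    rw [fderivWithin_of_isOpen hUopen hy]
    rfl
  have fder : ∀ y ∈ U, ‖fderiv ℝ φ y - fderiv ℝ φ x₀‖ ≤ M * ‖y - x₀‖ := fun y hy => by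
    rw [← fderiv_eq y hy, ← fderiv_eq x₀ hx₀, ← map_sub,
      LinearIsometryEquiv.norm_map]
    exact lip y hy
  set v := x - x₀ with hv
  have hmem : ∀ t ∈ Icc (0:ℝ) 1, x₀ + t • v ∈ U := fun t ht =>
    hUconv.add_smul_sub_mem hx₀ hx ht
  set g : ℝ → ℝ := fun t => φ (x₀ + t • v) - φ x₀ - t * (fderiv ℝ φ x₀ v) with hg
  have hg' : ∀ t ∈ Icc (0:ℝ) 1, HasDerivAt g
      (fderiv ℝ φ (x₀ + t • v) v - fderiv ℝ φ x₀ v) t := by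
    intro t ht
    have hline : HasDerivAt (fun t : ℝ => x₀ + t • v) v t := by
      simpa using ((hasDerivAt_id t).smul_const v).const_add x₀
    have h1 : HasDerivAt (fun t : ℝ => φ (x₀ + t • v)) (fderiv ℝ φ (x₀ + t • v) v) t :=
      (hφat _ (hmem t ht)).hasFDerivAt.comp_hasDerivAt t hline
    simpa [hg, Pi.sub_def] using (h1.sub_const (φ x₀)).sub ((hasDerivAt_id t).mul_const _)
  have bound : ∀ t ∈ Ico (0:ℝ) 1,
      ‖fderiv ℝ φ (x₀ + t • v) v - fderiv ℝ φ x₀ v‖ ≤ M * ‖v‖ ^ 2 * t := by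
    intro t ht
    have h1 : ‖fderiv ℝ φ (x₀ + t • v) v - fderiv ℝ φ x₀ v‖
        ≤ ‖fderiv ℝ φ (x₀ + t • v) - fderiv ℝ φ x₀‖ * ‖v‖ := by
      rw [← ContinuousLinearMap.sub_apply]
      exact (fderiv ℝ φ (x₀ + t • v) - fderiv ℝ φ x₀).le_opNorm v
    have h2 := fder _ (hmem t ⟨ht.1, ht.2.le⟩)
    have h3 : ‖x₀ + t • v - x₀‖ = t * ‖v‖ := by
      simp [norm_smul, abs_of_nonneg ht.1]
    calc ‖fderiv ℝ φ (x₀ + t • v) v - fderiv ℝ φ x₀ v‖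
        ≤ ‖fderiv ℝ φ (x₀ + t • v) - fderiv ℝ φ x₀‖ * ‖v‖ := h1
      _ ≤ M * ‖x₀ + t • v - x₀‖ * ‖v‖ := by
          gcongr
      _ = M * ‖v‖ ^ 2 * t := by rw [h3]; ring
  set B : ℝ → ℝ := fun t => M * ‖v‖ ^ 2 / 2 * t ^ 2 with hB
  have hB' : ∀ t : ℝ, HasDerivAt B (M * ‖v‖ ^ 2 * t) t := by
    intro t
    have := (hasDerivAt_pow 2 t).const_mul (M * ‖v‖ ^ 2 / 2)
    convert this using 1
    · rfl
    · rfl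
    push_cast
    ring
  have key := image_norm_le_of_norm_deriv_right_le_deriv_boundary
    (f := g) (a := 0) (b := 1)
    (fun t ht => ((hg' t ht).continuousAt.continuousWithinAt))
    (fun t ht => (hg' t ⟨ht.1, ht.2.le⟩).hasDerivWithinAt)
    (B := B) (B' := fun t => M * ‖v‖ ^ 2 * t)
    (by simp [hg, hB]) hB' bound (right_mem_Icc.2 zero_le_one)
  have hx₀v : x₀ + (1:ℝ) • v = x := by rw [one_smul, hv]; abel
  rw [hg] at key
  simp only [hx₀v, one_mul, hB, one_pow, mul_one, Real.norm_eq_abs] at key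
  calc |φ x - φ x₀ - fderiv ℝ φ x₀ (x - x₀)| ≤ M * ‖v‖ ^ 2 / 2 := key
    _ = M / 2 * ‖x - x₀‖ ^ 2 := by rw [hv]; ring

/-- A convex combination of functional values agrees with the functional evaluated at
the convex combination up to second order: the difference is controlled by the bound `M`
on the second derivative and the squared spread of the points. -/
theorem convex_combination_entropy_estimate
    {E : Type*} [NormedAddCommGroup E] [NormedSpace ℝ E]
    (U : Set E) (hUopen : IsOpen U) (hUconv : Convex ℝ U)
    (φ : E → ℝ) (M : ℝ)
    (hφ : ContDiffOn ℝ 2 φ U)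
    (hM : ∀ x ∈ U, ‖iteratedFDerivWithin ℝ 2 φ U x‖ ≤ M)
    (m : ℕ) (hm : 1 ≤ m)
    (u : Fin m → E) (hu : ∀ i, u i ∈ U)
    (ν : Fin m → ℝ) (hν : ∀ i, 0 ≤ ν i) (hν1 : ∑ i, ν i = 1) :
    |(∑ i, ν i * φ (u i)) - φ (∑ i, ν i • u i)| ≤
      (M / 2) *
        (Finset.univ.sup'
          (by
            have : Nonempty (Fin m) := ⟨⟨0, hm⟩⟩
            exact Finset.univ_nonempty)
          fun i => ‖u i - ∑ j, ν j • u j‖ ^ 2) := by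
  have : Nonempty (Fin m) := ⟨⟨0, hm⟩⟩
  set ubar : E := ∑ j, ν j • u j with hubar
  have hubarU : ubar ∈ U :=
    hUconv.sum_mem (fun i _ => hν i) hν1 (fun i _ => hu i)
  set L := fderiv ℝ φ ubar with hL
  have hM0 : 0 ≤ M := le_trans (norm_nonneg _) (hM ubar hubarU)
  set S := Finset.univ.sup' Finset.univ_nonempty (fun i => ‖u i - ubar‖ ^ 2) with hS
  -- the linear term vanishes
  have hlin : ∑ i, ν i * L (u i - ubar) = 0 := by
    have : ∑ i, ν i * L (u i - ubar) = L (∑ i, ν i • (u i - ubar)) := by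
      rw [map_sum]
      exact Finset.sum_congr rfl fun i _ => (L.map_smul (ν i) _).symm
    rw [this]
    have : ∑ i, ν i • (u i - ubar) = 0 := by
      simp only [smul_sub, Finset.sum_sub_distrib, ← Finset.sum_smul, hν1, one_smul, ← hubar,
        sub_self]
    rw [this, map_zero]
  have hrw : (∑ i, ν i * φ (u i)) - φ ubar
      = ∑ i, ν i * (φ (u i) - φ ubar - L (u i - ubar)) := by
    have h1 : ∑ i, ν i * φ ubar = φ ubar := by rw [← Finset.sum_mul, hν1, one_mul]
    simp only [mul_sub, Finset.sum_sub_distrib, h1, hlin, sub_zero]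
  rw [hrw]
  calc |∑ i, ν i * (φ (u i) - φ ubar - L (u i - ubar))|
      ≤ ∑ i, |ν i * (φ (u i) - φ ubar - L (u i - ubar))| := Finset.abs_sum_le_sum_abs _ _
    _ ≤ ∑ i, ν i * (M / 2 * S) := by
        apply Finset.sum_le_sum
        intro i _
        rw [abs_mul, abs_of_nonneg (hν i)]
        have hkey := taylor_key U hUopen hUconv φ M hφ hM hubarU (hu i)
        have hle : ‖u i - ubar‖ ^ 2 ≤ S := Finset.le_sup' (fun i => ‖u i - ubar‖ ^ 2) (Finset.mem_univ i)
        have : |φ (u i) - φ ubar - L (u i - ubar)| ≤ M / 2 * S :=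
          hkey.trans (by gcongr)
        exact mul_le_mul_of_nonneg_left this (hν i)
    _ = M / 2 * S := by rw [← Finset.sum_mul, hν1, one_mul]
end

section
/- Let E be a real Banach space, t* ∈ ℝ, p ≥ 2 a natural number, and u : ℝ → E twice continuously differentiable. Let t_new, t_old, γ : (0,∞) → ℝ and u_new, u_old : (0,∞) → E be functions of the step size h satisfying, as h → 0⁺: (i) t_new(h) − t* = O(h); (ii) t_new(h) − t_old(h) = O(h); (iii) u_new(h) − u(t_new(h)) = O(h^{p+1}); (iv) u_old(h) − u(t_old(h)) = O(h²); (v) γ(h) − 1 = O(h^{p−1}). Define the relaxed time t_γ(h) = t_old(h) + γ(h)(t_new(h) − t_old(h)) and the relaxed solution u_γ(h) = u_old(h) + γ(h)(u_new(h) − u_old(h)). Then u_γ(h) − u(t_γ(h)) = O(h^{p+1}) as h → 0⁺. -/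
open Filter Asymptotics Topology

/-- Quadratic Taylor remainder bound from a Lipschitz derivative on a convex set. -/
lemma taylor_quadratic_bound {E : Type*} [NormedAddCommGroup E] [NormedSpace ℝ E]
    {u : ℝ → E} (hdiff : ∀ t : ℝ, HasDerivAt u (deriv u t) t)
    {s : Set ℝ} (hconv : Convex ℝ s) {K : NNReal}
    (hlip : LipschitzOnWith K (deriv u) s) {a b : ℝ} (ha : a ∈ s) (hb : b ∈ s) :
    ‖u b - u a - (b - a) • deriv u a‖ ≤ K * |b - a| ^ 2 := by
  set g : ℝ → E := fun t => u t - t • deriv u a with hg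
  have hsub : Set.uIcc a b ⊆ s := hconv.ordConnected.uIcc_subset ha hb
  have hgd : ∀ t ∈ Set.uIcc a b,
      HasDerivWithinAt g (deriv u t - deriv u a) (Set.uIcc a b) t := by
    intro t ht
    have := ((hdiff t).sub ((hasDerivAt_id t).smul_const (deriv u a))).hasDerivWithinAt
      (s := Set.uIcc a b)
    have e : g = u - fun y => y • deriv u a := by funext y; simp [hg]
    rw [e]
    simpa using this
  have hbound : ∀ t ∈ Set.uIcc a b, ‖deriv u t - deriv u a‖ ≤ (K : ℝ) * |b - a| := by
    intro t ht
    have h1 : ‖deriv u t - deriv u a‖ ≤ (K : ℝ) * ‖t - a‖ := by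
      have := hlip.norm_sub_le (hsub ht) ha
      simpa using this
    have h2 : |t - a| ≤ |b - a| := by
      rcases Set.mem_uIcc.mp ht with ⟨h3, h4⟩ | ⟨h3, h4⟩ <;>
        · apply abs_le.mpr
          constructor <;> linarith [le_abs_self (b - a), neg_abs_le (b - a)]
    calc ‖deriv u t - deriv u a‖ ≤ (K : ℝ) * ‖t - a‖ := h1
      _ ≤ (K : ℝ) * |b - a| := by
          exact mul_le_mul_of_nonneg_left (by simpa [Real.norm_eq_abs] using h2) K.coe_nonneg
  have := Convex.norm_image_sub_le_of_norm_hasDerivWithin_le hgd hbound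
    (convex_uIcc a b) Set.left_mem_uIcc Set.right_mem_uIcc
  have hgab : g b - g a = u b - u a - (b - a) • deriv u a := by
    simp only [hg]
    rw [sub_smul]
    abel
  rw [hgab] at this
  calc ‖u b - u a - (b - a) • deriv u a‖ ≤ (K : ℝ) * |b - a| * ‖b - a‖ := this
    _ = K * |b - a| ^ 2 := by rw [Real.norm_eq_abs]; ring

/-- On `𝓝[>] 0`, higher powers are big-O of lower powers. -/
lemma pow_isBigO_pow {m n : ℕ} (hmn : n ≤ m) :
    (fun h : ℝ => h ^ m) =O[𝓝[>] (0:ℝ)] fun h => h ^ n := by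
  apply IsBigO.of_bound 1
  filter_upwards [Ioo_mem_nhdsGT_of_mem (by norm_num : (0:ℝ) ∈ Set.Ico (0:ℝ) 1)] with x hx
  rw [one_mul, Real.norm_eq_abs, Real.norm_eq_abs,
    abs_of_pos (pow_pos hx.1 _), abs_of_pos (pow_pos hx.1 _)]
  exact pow_le_pow_of_le_one hx.1.le hx.2.le hmn

/-- Accuracy of the relaxed solution: if the baseline method is of order `p ≥ 2`
(`u_new - u(t_new) = O(h^(p+1))`), the old value is second-order accurate
(`u_old - u(t_old) = O(h²)`), the times satisfy `t_new - t* = O(h)` and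
`t_new - t_old = O(h)`, and the relaxation parameter satisfies
`γ - 1 = O(h^(p-1))`, then the relaxed solution
`u_γ = u_old + γ (u_new - u_old)` approximates `u` at the relaxed time
`t_γ = t_old + γ (t_new - t_old)` to order `p`: `u_γ - u(t_γ) = O(h^(p+1))`. -/
theorem relaxation_accuracy
    {E : Type*} [NormedAddCommGroup E] [NormedSpace ℝ E]
    (tstar : ℝ) (p : ℕ) (hp : 2 ≤ p)
    (u : ℝ → E) (hu : ContDiff ℝ 2 u)
    (tnew told γ : ℝ → ℝ) (unew uold : ℝ → E)
    (h1 : (fun h => tnew h - tstar) =O[𝓝[>] (0:ℝ)] fun h => h)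
    (h2 : (fun h => tnew h - told h) =O[𝓝[>] (0:ℝ)] fun h => h)
    (h3 : (fun h => unew h - u (tnew h)) =O[𝓝[>] (0:ℝ)] fun h => h ^ (p + 1))
    (h4 : (fun h => uold h - u (told h)) =O[𝓝[>] (0:ℝ)] fun h => h ^ 2)
    (h5 : (fun h => γ h - 1) =O[𝓝[>] (0:ℝ)] fun h => h ^ (p - 1)) :
    (fun h => (uold h + γ h • (unew h - uold h)) -
        u (told h + γ h * (tnew h - told h))) =O[𝓝[>] (0:ℝ)] fun h => h ^ (p + 1) := by
  set l : Filter ℝ := 𝓝[>] (0:ℝ) with hl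
  -- basic facts about u
  have hu2 : ContDiff ℝ ((1:WithTop ℕ∞) + 1) u := by norm_num; exact hu
  have hud : Differentiable ℝ u := (contDiff_succ_iff_deriv.mp hu2).1
  have hud' : ContDiff ℝ 1 (deriv u) := (contDiff_succ_iff_deriv.mp hu2).2.2
  have hderiv : ∀ t : ℝ, HasDerivAt u (deriv u t) t := fun t => (hud t).hasDerivAt
  -- Lipschitz bound on deriv u near tstar
  obtain ⟨K, s, hs, hlip⟩ := (hud'.contDiffAt (x := tstar)).exists_lipschitzOnWith
  obtain ⟨ε, hε, hball⟩ := Metric.mem_nhds_iff.mp hs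
  have hlipb : LipschitzOnWith K (deriv u) (Metric.ball tstar ε) := hlip.mono hball
  have hconv : Convex ℝ (Metric.ball tstar ε) := convex_ball tstar ε
  -- h tends to 0
  have hh0 : Tendsto (fun h : ℝ => h) l (𝓝 0) := tendsto_id.mono_left nhdsWithin_le_nhds
  have hpow0 : ∀ n : ℕ, 1 ≤ n → Tendsto (fun h : ℝ => h ^ n) l (𝓝 0) := by
    intro n hn
    have : Tendsto (fun h : ℝ => h ^ n) l (𝓝 (0 ^ n)) := hh0.pow n
    simpa [zero_pow (by omega : n ≠ 0)] using this
  -- tendsto facts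
  have htnew : Tendsto tnew l (𝓝 tstar) := by
    have := (h1.trans_tendsto hh0).add_const tstar
    simpa using this
  have hΔ0 : Tendsto (fun h => tnew h - told h) l (𝓝 0) := h2.trans_tendsto hh0
  have htold : Tendsto told l (𝓝 tstar) := by
    have := htnew.sub hΔ0
    simpa using this
  have hγ1 : Tendsto γ l (𝓝 1) := by
    have := (h5.trans_tendsto (hpow0 (p - 1) (by omega))).add_const 1
    simpa using this
  set tγ : ℝ → ℝ := fun h => told h + γ h * (tnew h - told h) with htγ
  have htγt : Tendsto tγ l (𝓝 tstar) := by
    have := htold.add (hγ1.mul hΔ0)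
    simpa using this
  -- eventual membership in the ball
  have hmem : ∀ᶠ h in l, tnew h ∈ Metric.ball tstar ε ∧ told h ∈ Metric.ball tstar ε ∧
      tγ h ∈ Metric.ball tstar ε := by
    have hb : Metric.ball tstar ε ∈ 𝓝 tstar := Metric.ball_mem_nhds tstar hε
    filter_upwards [htnew.eventually_mem hb, htold.eventually_mem hb,
      htγt.eventually_mem hb] with x ha hb' hc
    exact ⟨ha, hb', hc⟩
  -- the key algebraic decomposition
  set Rnew : ℝ → E := fun x => u (tnew x) - u (tγ x) - (tnew x - tγ x) • deriv u (tγ x)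
    with hRnew
  set Rold : ℝ → E := fun x => u (told x) - u (tγ x) - (told x - tγ x) • deriv u (tγ x)
    with hRold
  have key : (fun x => (uold x + γ x • (unew x - uold x)) - u (tγ x)) =
      fun x => γ x • (unew x - u (tnew x)) + (1 - γ x) • (uold x - u (told x)) +
        γ x • Rnew x + (1 - γ x) • Rold x := by
    funext x
    simp only [hRnew, hRold, htγ]
    module
  rw [show (fun h => (uold h + γ h • (unew h - uold h)) -
      u (told h + γ h * (tnew h - told h))) =
      (fun x => (uold x + γ x • (unew x - uold x)) - u (tγ x)) from rfl, key]
  -- asymptotic building blocks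
  have hγO1 : γ =O[l] (fun _ => (1:ℝ)) := hγ1.isBigO_one ℝ
  have h1γ : (fun x => 1 - γ x) =O[l] fun h => h ^ (p - 1) := by
    have := h5.neg_left
    simpa [neg_sub] using this
  have hδ1 : (fun x => tnew x - tγ x) =O[l] fun h => h ^ p := by
    have heq : ∀ x, tnew x - tγ x = (1 - γ x) * (tnew x - told x) := by
      intro x; simp only [htγ]; ring
    have := h1γ.mul h2
    have h2' : (fun x => (1 - γ x) * (tnew x - told x)) =O[l] fun h => h ^ p := by
      refine this.trans (IsBigO.of_bound 1 ?_)
      filter_upwards with x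
      rw [one_mul, ← pow_succ]
      have : p - 1 + 1 = p := by omega
      rw [this]
    simpa only [← heq] using h2'
  have hδ2 : (fun x => told x - tγ x) =O[l] fun h => h := by
    have heq : ∀ x, told x - tγ x = -(γ x * (tnew x - told x)) := by
      intro x; simp only [htγ]; ring
    have heq' : (fun x => told x - tγ x) = fun x => -(γ x * (tnew x - told x)) :=
      funext heq
    rw [heq']
    simpa using (hγO1.mul h2).neg_left
  -- remainder bounds
  have hRnewO : Rnew =O[l] fun h => (h ^ p) ^ 2 := by
    have hb : Rnew =O[l] fun x => (tnew x - tγ x) ^ 2 := by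
      apply IsBigO.of_bound K
      filter_upwards [hmem] with x ⟨hx1, hx2, hx3⟩
      have := taylor_quadratic_bound hderiv hconv hlipb hx3 hx1
      calc ‖Rnew x‖ ≤ K * |tnew x - tγ x| ^ 2 := this
        _ = K * ‖(tnew x - tγ x) ^ 2‖ := by
            rw [Real.norm_eq_abs, abs_pow]
    refine hb.trans ?_
    have := hδ1.mul hδ1
    simpa [pow_two] using this
  have hRoldO : Rold =O[l] fun h => h ^ 2 := by
    have hb : Rold =O[l] fun x => (told x - tγ x) ^ 2 := by
      apply IsBigO.of_bound K
      filter_upwards [hmem] with x ⟨hx1, hx2, hx3⟩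
      have := taylor_quadratic_bound hderiv hconv hlipb hx3 hx2
      calc ‖Rold x‖ ≤ K * |told x - tγ x| ^ 2 := this
        _ = K * ‖(told x - tγ x) ^ 2‖ := by
            rw [Real.norm_eq_abs, abs_pow]
    refine hb.trans ?_
    have := hδ2.mul hδ2
    simpa [pow_two] using this
  -- assemble
  have t1 : (fun x => γ x • (unew x - u (tnew x))) =O[l] fun h => h ^ (p + 1) := by
    have := hγO1.smul h3
    simpa using this
  have t2 : (fun x => (1 - γ x) • (uold x - u (told x))) =O[l] fun h => h ^ (p + 1) := by
    have := h1γ.smul h4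
    refine this.trans (IsBigO.of_bound 1 ?_)
    filter_upwards with x
    rw [one_mul, smul_eq_mul, ← pow_add]
    have : p - 1 + 2 = p + 1 := by omega
    rw [this]
  have t3 : (fun x => γ x • Rnew x) =O[l] fun h => h ^ (p + 1) := by
    have hstep := hγO1.smul hRnewO
    have h2p : (fun h : ℝ => (h ^ p) ^ 2) =O[l] fun h => h ^ (p + 1) := by
      have : (fun h : ℝ => h ^ (p * 2)) =O[l] fun h => h ^ (p + 1) :=
        pow_isBigO_pow (by omega)
      simpa [← pow_mul] using this
    have := hstep.trans (by simpa using h2p)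
    simpa using this
  have t4 : (fun x => (1 - γ x) • Rold x) =O[l] fun h => h ^ (p + 1) := by
    have := h1γ.smul hRoldO
    refine this.trans (IsBigO.of_bound 1 ?_)
    filter_upwards with x
    rw [one_mul, smul_eq_mul, ← pow_add]
    have : p - 1 + 2 = p + 1 := by omega
    rw [this]
  exact ((t1.add t2).add t3).add t4
end

section
/- Let k ≥ 1 and ℓ ≥ 1 be natural numbers, let α_0, …, α_{k−1} and β_0, …, β_{k−1} be real numbers, and let Ω_0, …, Ω_k be real numbers with Ω_j = j + δ_j where |δ_j| ≤ ε for all j and 0 ≤ ε ≤ 1. Define C_ℓ(Ω) = ∑_{j=0}^{k−1} (Ω_j^ℓ α_j + ℓ Ω_j^{ℓ−1} β_j) − Ω_k^ℓ and C_ℓ^{unif} = ∑_{j=0}^{k−1} (j^ℓ α_j + ℓ j^{ℓ−1} β_j) − k^ℓ. Then |C_ℓ(Ω) − C_ℓ^{unif}| ≤ ℓ (k+1)^{ℓ−1} (1 + ∑_{j=0}^{k−1}|α_j| + ℓ ∑_{j=0}^{k−1}|β_j|) · ε. -/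
lemma pow_diff_bound (x y M : ℝ) (m : ℕ) (hx : |x| ≤ M) (hy : |y| ≤ M) :
    |x ^ m - y ^ m| ≤ (m : ℝ) * M ^ (m - 1) * |x - y| := by
  have hM0 : 0 ≤ M := le_trans (abs_nonneg x) hx
  rw [← geom_sum₂_mul, abs_mul]
  gcongr ?_ * _
  calc |∑ i ∈ Finset.range m, x ^ i * y ^ (m - 1 - i)|
      ≤ ∑ i ∈ Finset.range m, |x ^ i * y ^ (m - 1 - i)| := Finset.abs_sum_le_sum_abs _ _
    _ ≤ ∑ i ∈ Finset.range m, M ^ (m - 1) := by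
        apply Finset.sum_le_sum
        intro i hi
        rw [abs_mul, abs_pow, abs_pow]
        calc |x| ^ i * |y| ^ (m - 1 - i) ≤ M ^ i * M ^ (m - 1 - i) := by gcongr
          _ = M ^ (i + (m - 1 - i)) := (pow_add M i _).symm
          _ = M ^ (m - 1) := by
              congr 1
              have : i ≤ m - 1 := Nat.le_sub_one_of_lt (Finset.mem_range.mp hi)
              omega
    _ = (m : ℝ) * M ^ (m - 1) := by rw [Finset.sum_const, Finset.card_range, nsmul_eq_mul]

/-- Perturbation bound for the error coefficients of a linear multistep method used with
perturbed step sizes: if `Ω_j = j + δ_j` with `|δ_j| ≤ ε ≤ 1`, then the perturbed error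
coefficient `C_ℓ(Ω)` differs from the uniform one `C_ℓ^unif` by at most
`ℓ (k+1)^(ℓ-1) (1 + ∑|α_j| + ℓ ∑|β_j|) ε`. -/
theorem lmm_error_coefficient_perturbation
    (k ℓ : ℕ) (hk : 1 ≤ k) (hℓ : 1 ≤ ℓ)
    (α β δ : ℕ → ℝ) (ε : ℝ) (hε0 : 0 ≤ ε) (hε1 : ε ≤ 1)
    (Ω : ℕ → ℝ) (hΩ : ∀ j ≤ k, Ω j = (j : ℝ) + δ j)
    (hδ : ∀ j ≤ k, |δ j| ≤ ε) :
    |((∑ j ∈ Finset.range k, (Ω j ^ ℓ * α j + (ℓ : ℝ) * Ω j ^ (ℓ - 1) * β j)) - Ω k ^ ℓ)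
      - ((∑ j ∈ Finset.range k,
            ((j : ℝ) ^ ℓ * α j + (ℓ : ℝ) * (j : ℝ) ^ (ℓ - 1) * β j)) - (k : ℝ) ^ ℓ)|
    ≤ (ℓ : ℝ) * ((k : ℝ) + 1) ^ (ℓ - 1) *
        (1 + (∑ j ∈ Finset.range k, |α j|) + (ℓ : ℝ) * ∑ j ∈ Finset.range k, |β j|) * ε := by
  set M : ℝ := (k : ℝ) + 1 with hMdef
  have hM1 : (1 : ℝ) ≤ M := by have : (0:ℝ) ≤ (k:ℝ) := Nat.cast_nonneg k; simp only [hMdef]; linarith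
  set B : ℝ := (ℓ : ℝ) * M ^ (ℓ - 1) * ε with hBdef
  have hB0 : 0 ≤ B := by positivity
  have hM : ∀ j ≤ k, |Ω j| ≤ M := by
    intro j hj
    rw [hΩ j hj]
    calc |(j : ℝ) + δ j| ≤ |(j : ℝ)| + |δ j| := abs_add_le _ _
      _ ≤ (k : ℝ) + 1 := by
          have h1 : |(j : ℝ)| = (j : ℝ) := abs_of_nonneg (by positivity)
          have h2 : (j : ℝ) ≤ (k : ℝ) := by exact_mod_cast hj
          linarith [hδ j hj]
  have hjM : ∀ j ≤ k, |(j : ℝ)| ≤ M := by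
    intro j hj
    have h2 : (j : ℝ) ≤ (k : ℝ) := by exact_mod_cast hj
    rw [abs_of_nonneg (by positivity : (0:ℝ) ≤ (j:ℝ))]; linarith
  have hdiff : ∀ j ≤ k, |Ω j - (j : ℝ)| ≤ ε := by
    intro j hj; rw [hΩ j hj]; simpa using hδ j hj
  have hA : ∀ j ≤ k, |Ω j ^ ℓ - (j : ℝ) ^ ℓ| ≤ B := by
    intro j hj
    calc |Ω j ^ ℓ - (j : ℝ) ^ ℓ| ≤ (ℓ : ℝ) * M ^ (ℓ - 1) * |Ω j - (j : ℝ)| :=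
          pow_diff_bound _ _ _ _ (hM j hj) (hjM j hj)
      _ ≤ (ℓ : ℝ) * M ^ (ℓ - 1) * ε :=
          mul_le_mul_of_nonneg_left (hdiff j hj) (by positivity)
  have hA' : ∀ j ≤ k, |Ω j ^ (ℓ - 1) - (j : ℝ) ^ (ℓ - 1)| ≤ B := by
    intro j hj
    calc |Ω j ^ (ℓ - 1) - (j : ℝ) ^ (ℓ - 1)|
        ≤ ((ℓ - 1 : ℕ) : ℝ) * M ^ (ℓ - 1 - 1) * |Ω j - (j : ℝ)| :=
          pow_diff_bound _ _ _ _ (hM j hj) (hjM j hj)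
      _ ≤ (ℓ : ℝ) * M ^ (ℓ - 1) * ε := by
          have h1 : ((ℓ - 1 : ℕ) : ℝ) ≤ (ℓ : ℝ) := by exact_mod_cast Nat.sub_le ℓ 1
          have h2 : M ^ (ℓ - 1 - 1) ≤ M ^ (ℓ - 1) := pow_le_pow_right₀ hM1 (Nat.sub_le _ _)
          have h3 := hdiff j hj
          have h5 : (0:ℝ) ≤ M ^ (ℓ - 1 - 1) := by positivity
          exact mul_le_mul (mul_le_mul h1 h2 h5 (by positivity)) h3 (abs_nonneg _)
            (by positivity)
  have hkey : ((∑ j ∈ Finset.range k, (Ω j ^ ℓ * α j + (ℓ : ℝ) * Ω j ^ (ℓ - 1) * β j)) - Ω k ^ ℓ)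
      - ((∑ j ∈ Finset.range k,
            ((j : ℝ) ^ ℓ * α j + (ℓ : ℝ) * (j : ℝ) ^ (ℓ - 1) * β j)) - (k : ℝ) ^ ℓ)
      = (∑ j ∈ Finset.range k, ((Ω j ^ ℓ - (j : ℝ) ^ ℓ) * α j
          + (ℓ : ℝ) * (Ω j ^ (ℓ - 1) - (j : ℝ) ^ (ℓ - 1)) * β j))
        - (Ω k ^ ℓ - (k : ℝ) ^ ℓ) := by
    have he : ∀ j ∈ Finset.range k,
        (Ω j ^ ℓ - (j : ℝ) ^ ℓ) * α j
          + (ℓ : ℝ) * (Ω j ^ (ℓ - 1) - (j : ℝ) ^ (ℓ - 1)) * β j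
        = (Ω j ^ ℓ * α j + (ℓ : ℝ) * Ω j ^ (ℓ - 1) * β j)
          - ((j : ℝ) ^ ℓ * α j + (ℓ : ℝ) * (j : ℝ) ^ (ℓ - 1) * β j) := fun j _ => by ring
    rw [Finset.sum_congr rfl he, Finset.sum_sub_distrib]
    ring
  rw [hkey]
  calc |(∑ j ∈ Finset.range k, ((Ω j ^ ℓ - (j : ℝ) ^ ℓ) * α j
          + (ℓ : ℝ) * (Ω j ^ (ℓ - 1) - (j : ℝ) ^ (ℓ - 1)) * β j))
        - (Ω k ^ ℓ - (k : ℝ) ^ ℓ)|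
      ≤ |∑ j ∈ Finset.range k, ((Ω j ^ ℓ - (j : ℝ) ^ ℓ) * α j
          + (ℓ : ℝ) * (Ω j ^ (ℓ - 1) - (j : ℝ) ^ (ℓ - 1)) * β j)|
        + |Ω k ^ ℓ - (k : ℝ) ^ ℓ| := abs_sub _ _
    _ ≤ (∑ j ∈ Finset.range k, (B * |α j| + (ℓ : ℝ) * B * |β j|)) + B := by
        gcongr ?_ + ?_
        · calc |∑ j ∈ Finset.range k, ((Ω j ^ ℓ - (j : ℝ) ^ ℓ) * α j
              + (ℓ : ℝ) * (Ω j ^ (ℓ - 1) - (j : ℝ) ^ (ℓ - 1)) * β j)|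
              ≤ ∑ j ∈ Finset.range k, |(Ω j ^ ℓ - (j : ℝ) ^ ℓ) * α j
                + (ℓ : ℝ) * (Ω j ^ (ℓ - 1) - (j : ℝ) ^ (ℓ - 1)) * β j| :=
                Finset.abs_sum_le_sum_abs _ _
            _ ≤ ∑ j ∈ Finset.range k, (B * |α j| + (ℓ : ℝ) * B * |β j|) := by
                apply Finset.sum_le_sum
                intro j hj
                have hjk : j ≤ k := le_of_lt (Finset.mem_range.mp hj)
                calc |(Ω j ^ ℓ - (j : ℝ) ^ ℓ) * α j
                    + (ℓ : ℝ) * (Ω j ^ (ℓ - 1) - (j : ℝ) ^ (ℓ - 1)) * β j|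
                    ≤ |(Ω j ^ ℓ - (j : ℝ) ^ ℓ) * α j|
                      + |(ℓ : ℝ) * (Ω j ^ (ℓ - 1) - (j : ℝ) ^ (ℓ - 1)) * β j| := abs_add_le _ _
                  _ ≤ B * |α j| + (ℓ : ℝ) * B * |β j| := by
                      rw [abs_mul, abs_mul, abs_mul, Nat.abs_cast]
                      have t1 := mul_le_mul_of_nonneg_right (hA j hjk) (abs_nonneg (α j))
                      have t2 := mul_le_mul_of_nonneg_right
                        (mul_le_mul_of_nonneg_left (hA' j hjk)
                          (by positivity : (0:ℝ) ≤ (ℓ:ℝ))) (abs_nonneg (β j))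
                      linarith
        · exact hA k le_rfl
    _ ≤ (ℓ : ℝ) * M ^ (ℓ - 1) *
        (1 + (∑ j ∈ Finset.range k, |α j|) + (ℓ : ℝ) * ∑ j ∈ Finset.range k, |β j|) * ε := by
        rw [Finset.sum_add_distrib, ← Finset.mul_sum, ← Finset.mul_sum, hBdef]
        ring_nf
        nlinarith [Finset.sum_nonneg (fun j (_ : j ∈ Finset.range k) => abs_nonneg (α j)),
          Finset.sum_nonneg (fun j (_ : j ∈ Finset.range k) => abs_nonneg (β j))]
end

section
/- Let A be the real 3×3 matrix with rows (0, −1, 1), (1, 0, −1), (−1, 1, 0), let u⁰ = (−1, 0, 0), and let h > 0. Define v = u⁰ + hAu⁰ + (h²/2)A²u⁰ (the SSPRK(2,2) update for u' = Au). Then: (i) v₁ + v₂ + v₃ = −1; (ii) ‖v‖² = 1 + (3/2)h⁴ (Euclidean norm); and (iii) the orthogonally projected vector w = v/‖v‖, which satisfies ‖w‖ = ‖u⁰‖ = 1, has total mass w₁ + w₂ + w₃ = −√2/√(2 + 3h⁴), which is strictly greater than u⁰₁ + u⁰₂ + u⁰₃ = −1. -/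
open Matrix

/-- Orthogonal projection violates the linear invariant "total mass": the SSPRK(2,2)
update `v = (I + hA + (h²/2)A²) u⁰` for `u' = Au` has total mass `-1` and squared
Euclidean norm `1 + (3/2) h⁴`; the orthogonally projected vector `w = v / ‖v‖` lies
on the unit sphere but has total mass `-√2/√(2 + 3h⁴) > -1`. -/
theorem projection_violates_total_mass
    (h : ℝ) (hh : 0 < h)
    (A : Matrix (Fin 3) (Fin 3) ℝ)
    (hA : A = !![0, -1, 1; 1, 0, -1; -1, 1, 0])
    (u0 : Fin 3 → ℝ) (hu0 : u0 = ![-1, 0, 0])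
    (v : Fin 3 → ℝ)
    (hv : v = u0 + h • A.mulVec u0 + (h ^ 2 / 2) • A.mulVec (A.mulVec u0))
    (w : Fin 3 → ℝ)
    (hw : w = (Real.sqrt (v 0 ^ 2 + v 1 ^ 2 + v 2 ^ 2))⁻¹ • v) :
    (v 0 + v 1 + v 2 = -1)
    ∧ (v 0 ^ 2 + v 1 ^ 2 + v 2 ^ 2 = 1 + (3 / 2) * h ^ 4)
    ∧ (w 0 ^ 2 + w 1 ^ 2 + w 2 ^ 2 = u0 0 ^ 2 + u0 1 ^ 2 + u0 2 ^ 2)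
    ∧ (w 0 + w 1 + w 2 = -Real.sqrt 2 / Real.sqrt (2 + 3 * h ^ 4))
    ∧ (u0 0 + u0 1 + u0 2 < w 0 + w 1 + w 2) := by
  have hAu : A.mulVec u0 = ![0, -1, 1] := by
    subst hA hu0
    funext i
    fin_cases i <;>
      simp [Matrix.mulVec, dotProduct, Fin.sum_univ_three]
  have hAAu : A.mulVec (A.mulVec u0) = ![2, -1, -1] := by
    rw [hAu]; subst hA
    funext i
    fin_cases i <;>
      simp [Matrix.mulVec, dotProduct, Fin.sum_univ_three] <;> norm_num
  rw [hAAu, hAu] at hv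
  have hv0 : v 0 = -1 + h ^ 2 := by
    rw [hv, hu0]; simp <;> ring
  have hv1 : v 1 = -h - h ^ 2 / 2 := by
    rw [hv, hu0]; simp <;> ring
  have hv2 : v 2 = h - h ^ 2 / 2 := by
    rw [hv, hu0]; simp <;> ring
  have hsum : v 0 + v 1 + v 2 = -1 := by rw [hv0, hv1, hv2]; ring
  have hnorm : v 0 ^ 2 + v 1 ^ 2 + v 2 ^ 2 = 1 + (3 / 2) * h ^ 4 := by
    rw [hv0, hv1, hv2]; ring
  have hpos : (0:ℝ) < 1 + (3 / 2) * h ^ 4 := by positivity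
  have hs : (0:ℝ) < Real.sqrt (1 + (3 / 2) * h ^ 4) := Real.sqrt_pos.mpr hpos
  have hsq : (Real.sqrt (1 + (3 / 2) * h ^ 4)) ^ 2 = 1 + (3 / 2) * h ^ 4 :=
    Real.sq_sqrt hpos.le
  have hwc : ∀ i, w i = (Real.sqrt (1 + (3 / 2) * h ^ 4))⁻¹ * v i := by
    intro i; rw [hw, hnorm]; rfl
  have h2 : (0:ℝ) < 2 + 3 * h ^ 4 := by positivity
  have key : Real.sqrt (1 + (3 / 2) * h ^ 4) = Real.sqrt (2 + 3 * h ^ 4) / Real.sqrt 2 := by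
    rw [show (1 + (3 / 2) * h ^ 4 : ℝ) = (2 + 3 * h ^ 4) / 2 by ring,
      Real.sqrt_div h2.le]
  have hwsum : w 0 + w 1 + w 2 = -Real.sqrt 2 / Real.sqrt (2 + 3 * h ^ 4) := by
    rw [hwc 0, hwc 1, hwc 2, ← mul_add, ← mul_add, hsum, key]
    have hs2 : (0:ℝ) < Real.sqrt 2 := Real.sqrt_pos.mpr (by norm_num)
    have hs3 : (0:ℝ) < Real.sqrt (2 + 3 * h ^ 4) := Real.sqrt_pos.mpr h2
    field_simp
  refine ⟨hsum, hnorm, ?_, hwsum, ?_⟩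
  · rw [hwc 0, hwc 1, hwc 2, hu0]
    simp only [Matrix.cons_val_zero, Matrix.cons_val_one, Matrix.head_cons]
    have : ((Real.sqrt (1 + (3 / 2) * h ^ 4))⁻¹) ^ 2 * (1 + (3 / 2) * h ^ 4) = 1 := by
      rw [inv_pow, hsq, inv_mul_cancel₀ hpos.ne']
    calc ((Real.sqrt (1 + (3 / 2) * h ^ 4))⁻¹ * v 0) ^ 2
        + ((Real.sqrt (1 + (3 / 2) * h ^ 4))⁻¹ * v 1) ^ 2
        + ((Real.sqrt (1 + (3 / 2) * h ^ 4))⁻¹ * v 2) ^ 2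
        = ((Real.sqrt (1 + (3 / 2) * h ^ 4))⁻¹) ^ 2 * (v 0 ^ 2 + v 1 ^ 2 + v 2 ^ 2) := by
          ring
      _ = 1 := by rw [hnorm, this]
      _ = _ := by norm_num; rfl
  · rw [hwsum, hu0]
    have hs2 : (0:ℝ) < Real.sqrt 2 := Real.sqrt_pos.mpr (by norm_num)
    have hs3 : (0:ℝ) < Real.sqrt (2 + 3 * h ^ 4) := Real.sqrt_pos.mpr h2
    have hlt : Real.sqrt 2 < Real.sqrt (2 + 3 * h ^ 4) := by
      apply Real.sqrt_lt_sqrt (by norm_num)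
      have : 0 < h ^ 4 := by positivity
      linarith
    have : -Real.sqrt 2 / Real.sqrt (2 + 3 * h ^ 4) > -1 := by
      rw [gt_iff_lt, neg_div, neg_lt_neg_iff, div_lt_one hs3]
      exact hlt
    simpa using this
end
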